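/- Let u be a semiconcave solution of |Du|²/2 + V = α[0] on 𝕋^d, δ(V) = max V − min V, and x ∈ 𝕋^d with τ(x) = ∞. If some weak-limit occupational measure μ ∈ 𝒲_u(x) satisfies ∫ V dμ < α[0], then δ(V) > 0 and, setting η = (1/3)∫(α[0] − V) dμ, one has limsup_{T→∞} (1/T)·𝓛¹({t ∈ [0,T] : |p₀(x_u(t,x))|²/2 + V(x_u(t,x)) + η ≤ α[0]}) ≥ η/δ(V). -/

import Mathlib

open MeasureTheory Set Filter Topology

/-- The flat torus `𝕋^d`. -/
abbrev Torus (d : ℕ) := Fin d → AddCircle (1:ℝ)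

/-- Theorem (case `∫ V dμ < α₀`): let `u` be a (bounded, continuous) semiconcave
solution of `|Du|²/2 + V = α₀` on `𝕋^d`, encoded through the function `q = |p₀|`
(the norm of the minimal-norm element of `D⁺u`), which is nonnegative, lower
semicontinuous, satisfies the subsolution bound `q²/2 + V ≤ α₀`, and the energy
identity `u(x_u(T,x)) - u(x) = ∫₀ᵀ q(x_u(t,x))² dt` along the generalized gradient
flow `X` starting at `x`. Assume the critical time of `x` is infinite (`q(X t) ≠ 0` for
all `t ≥ 0`) and that some weak-limit occupational measure `μ ∈ 𝒲_u(x)` satisfies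
`∫ V dμ < α₀`. Then `δ(V) = max V - min V > 0` and, with
`η = (1/3)∫(α₀ - V) dμ`,
`limsup_{T→∞} (1/T)·𝓛¹({t ∈ [0,T] : q(X t)²/2 + V(X t) + η ≤ α₀}) ≥ η/δ(V)`. -/
theorem stmt_17 {d : ℕ} (u V : Torus d → ℝ) (hu : Continuous u) (hVc : Continuous V)
    (α0 : ℝ) (hα0 : IsGreatest (Set.range V) α0)
    (m0 : ℝ) (hm0 : IsLeast (Set.range V) m0)
    (q : Torus d → ℝ) (hqnn : ∀ y, 0 ≤ q y) (hqlsc : LowerSemicontinuous q)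
    (hqsub : ∀ y, q y ^ 2 / 2 + V y ≤ α0)
    (x : Torus d) (X : ℝ → Torus d) (hXc : Continuous X) (hX0 : X 0 = x)
    (hqint : ∀ T > (0:ℝ), IntervalIntegrable (fun t => q (X t) ^ 2) volume 0 T)
    (henergy : ∀ T, 0 ≤ T → u (X T) - u x = ∫ t in (0:ℝ)..T, q (X t) ^ 2)
    (htau : ∀ t, 0 ≤ t → q (X t) ≠ 0)
    (T : ℕ → ℝ) (hTtop : Tendsto T atTop atTop)
    (μ : Measure (Torus d)) [IsProbabilityMeasure μ]
    (hconv : ∀ f : Torus d → ℝ, Continuous f →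
      Tendsto (fun k => (T k)⁻¹ * ∫ t in (0:ℝ)..(T k), f (X t))
        atTop (𝓝 (∫ y, f y ∂μ)))
    (hVμ : ∫ y, V y ∂μ < α0) :
    0 < α0 - m0 ∧
      ((1/3 * ∫ y, (α0 - V y) ∂μ) / (α0 - m0) ≤
        Filter.limsup (fun S : ℝ =>
          S⁻¹ * (volume {t ∈ Icc (0:ℝ) S |
              q (X t) ^ 2 / 2 + V (X t) + 1/3 * ∫ y, (α0 - V y) ∂μ ≤ α0}).toReal)
          atTop) := by
  -- integrability of V w.r.t. μ
  have hVint : Integrable V μ := by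
    apply hVc.integrable_of_hasCompactSupport
    exact HasCompactSupport.of_compactSpace V
  set I := ∫ y, (α0 - V y) ∂μ with hIdef
  have hIeq : I = α0 - ∫ y, V y ∂μ := by
    rw [hIdef, integral_sub (integrable_const α0) hVint, integral_const, probReal_univ,
      one_smul]
  set η := 1/3 * I with hηdef
  have hIpos : 0 < I := by rw [hIeq]; linarith
  have hηpos : 0 < η := by rw [hηdef]; linarith
  set δ := α0 - m0 with hδdef
  -- δ > 0
  have hVle : ∀ y, V y ≤ α0 := fun y => hα0.2 ⟨y, rfl⟩
  have hVge : ∀ y, m0 ≤ V y := fun y => hm0.2 ⟨y, rfl⟩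
  have hδpos : 0 < δ := by
    by_contra h
    push_neg at h
    have hm : m0 ≤ ∫ y, V y ∂μ := by
      have := integral_mono (integrable_const m0) hVint hVge
      simpa [integral_const, measure_univ] using this
    have : α0 ≤ m0 := by rw [hδdef] at h; linarith
    linarith
  refine ⟨hδpos, ?_⟩
  -- measurability of the integrand
  have hqm : Measurable q := hqlsc.measurable
  have hgm : Measurable fun t : ℝ => q (X t) ^ 2 / 2 + V (X t) + η :=
    ((((hqm.comp hXc.measurable).pow_const 2).div_const 2).add
      (hVc.comp hXc).measurable).add_const η
  have hAm : ∀ S : ℝ, MeasurableSet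
      {t ∈ Icc (0:ℝ) S | q (X t) ^ 2 / 2 + V (X t) + η ≤ α0} := fun S =>
    measurableSet_Icc.inter (measurableSet_le hgm measurable_const)
  have hAfin : ∀ S : ℝ, volume {t ∈ Icc (0:ℝ) S | q (X t) ^ 2 / 2 + V (X t) + η ≤ α0} < ⊤ :=
    fun S => lt_of_le_of_lt (measure_mono (sep_subset _ _))
      (by rw [Real.volume_Icc]; exact ENNReal.ofReal_lt_top)
  -- the unscaled key inequality
  have hunsc : ∀ S : ℝ, 0 < S →
      α0 * S - (u (X S) - u x) / 2 - (∫ t in (0:ℝ)..S, V (X t)) ≤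
        δ * (volume {t ∈ Icc (0:ℝ) S | q (X t) ^ 2 / 2 + V (X t) + η ≤ α0}).toReal
          + η * S := by
    intro S hS
    set A := {t ∈ Icc (0:ℝ) S | q (X t) ^ 2 / 2 + V (X t) + η ≤ α0} with hA
    have hiq := hqint S hS
    have hiq2 : IntervalIntegrable (fun t => q (X t) ^ 2 / 2) volume 0 S := hiq.div_const 2
    have hiV : IntervalIntegrable (fun t => V (X t)) volume 0 S :=
      (hVc.comp hXc).intervalIntegrable 0 S
    have hind : Integrable (A.indicator fun _ => δ) volume :=
      (integrable_indicator_iff (hAm S)).2 (integrableOn_const (hAfin S).ne)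
    have hpt : ∀ t ∈ Icc (0:ℝ) S,
        α0 - q (X t) ^ 2 / 2 - V (X t) ≤ A.indicator (fun _ => δ) t + η := by
      intro t ht
      by_cases hta : t ∈ A
      · rw [indicator_of_mem hta]
        have h1 := hVge (X t)
        have h2 := sq_nonneg (q (X t))
        rw [hδdef]
        nlinarith [hηpos]
      · rw [indicator_of_notMem hta]
        have : ¬(q (X t) ^ 2 / 2 + V (X t) + η ≤ α0) := fun h => hta ⟨ht, h⟩
        push_neg at this
        linarith
    have hmono := intervalIntegral.integral_mono_on hS.le
      ((intervalIntegrable_const.sub hiq2).sub hiV)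
      (hind.intervalIntegrable.add intervalIntegrable_const) hpt
    rw [intervalIntegral.integral_sub (intervalIntegrable_const.sub hiq2) hiV,
      intervalIntegral.integral_sub intervalIntegrable_const hiq2,
      intervalIntegral.integral_const, intervalIntegral.integral_div,
      ← henergy S hS.le,
      intervalIntegral.integral_add hind.intervalIntegrable intervalIntegrable_const,
      intervalIntegral.integral_const] at hmono
    have hindval : (∫ t in (0:ℝ)..S, A.indicator (fun _ => δ) t) ≤ δ * (volume A).toReal := by
      rw [intervalIntegral.integral_of_le hS.le, setIntegral_indicator (hAm S),
        setIntegral_const, smul_eq_mul, mul_comm]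
      have hmle : (volume (Ioc (0:ℝ) S ∩ A)).toReal ≤ (volume A).toReal :=
        ENNReal.toReal_mono (hAfin S).ne (measure_mono inter_subset_right)
      exact mul_le_mul_of_nonneg_left hmle hδpos.le
    simp only [sub_zero, smul_eq_mul] at hmono
    calc α0 * S - (u (X S) - u x) / 2 - (∫ t in (0:ℝ)..S, V (X t))
        = S * α0 - (u (X S) - u x) / 2 - (∫ t in (0:ℝ)..S, V (X t)) := by ring
      _ ≤ (∫ t in (0:ℝ)..S, A.indicator (fun _ => δ) t) + S * η := hmono
      _ ≤ δ * (volume A).toReal + S * η := by linarith [hindval]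
      _ = δ * (volume A).toReal + η * S := by ring
  -- the scaled key inequality
  have hkey : ∀ S : ℝ, 0 < S →
      α0 - (u (X S) - u x) / (2 * S) - S⁻¹ * (∫ t in (0:ℝ)..S, V (X t)) - η ≤
        δ * (S⁻¹ * (volume {t ∈ Icc (0:ℝ) S |
          q (X t) ^ 2 / 2 + V (X t) + η ≤ α0}).toReal) := by
    intro S hS
    have h := hunsc S hS
    have hSne : S ≠ 0 := hS.ne'
    set v := (volume {t ∈ Icc (0:ℝ) S | q (X t) ^ 2 / 2 + V (X t) + η ≤ α0}).toReal
    set J := ∫ t in (0:ℝ)..S, V (X t)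
    rw [show α0 - (u (X S) - u x) / (2 * S) - S⁻¹ * J - η
        = S⁻¹ * (α0 * S - (u (X S) - u x) / 2 - J - η * S) by field_simp,
      show δ * (S⁻¹ * v) = S⁻¹ * (δ * v) by ring]
    exact mul_le_mul_of_nonneg_left (by linarith) (inv_nonneg.2 hS.le)
  -- bound on u
  obtain ⟨C, hC⟩ : ∃ C, ∀ y, ‖u y‖ ≤ C := by
    obtain ⟨C, hC⟩ := isCompact_univ.exists_bound_of_continuousOn hu.continuousOn
    exact ⟨C, fun y => hC y (mem_univ y)⟩
  have habsb : ∀ k, |u (X (T k)) - u x| ≤ C + C := by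
    intro k
    have h1 : |u (X (T k)) - u x| ≤ |u (X (T k))| + |u x| := abs_sub _ _
    have h2 : |u (X (T k))| ≤ C := hC _
    have h3 : |u x| ≤ C := hC _
    linarith
  -- the vanishing term
  have hterm2 : Tendsto (fun k => (u (X (T k)) - u x) / (2 * T k)) atTop (𝓝 0) := by
    apply tendsto_bdd_div_atTop_nhds_zero (b := -(C + C)) (B := C + C)
    · filter_upwards with k using (abs_le.1 (habsb k)).1
    · filter_upwards with k using (abs_le.1 (habsb k)).2
    · exact hTtop.const_mul_atTop two_pos
  -- limit of the left-hand sides along T k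
  have htendc : Tendsto (fun k => α0 - (u (X (T k)) - u x) / (2 * T k)
      - (T k)⁻¹ * (∫ t in (0:ℝ)..(T k), V (X t)) - η) atTop (𝓝 (2 * η)) := by
    have h : Tendsto (fun k => α0 - (u (X (T k)) - u x) / (2 * T k)
        - (T k)⁻¹ * (∫ t in (0:ℝ)..(T k), V (X t)) - η) atTop
        (𝓝 (α0 - 0 - (∫ y, V y ∂μ) - η)) :=
      ((tendsto_const_nhds.sub hterm2).sub (hconv V hVc)).sub tendsto_const_nhds
    have heq : α0 - 0 - (∫ y, V y ∂μ) - η = 2 * η := by linarith [hIeq, hηdef]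
    rwa [heq] at h
  -- eventually along T k the density is at least η / δ
  have hev : ∀ᶠ k in atTop, η / δ ≤
      (T k)⁻¹ * (volume {t ∈ Icc (0:ℝ) (T k) |
        q (X t) ^ 2 / 2 + V (X t) + η ≤ α0}).toReal := by
    have h1 : ∀ᶠ k in atTop, η < α0 - (u (X (T k)) - u x) / (2 * T k)
        - (T k)⁻¹ * (∫ t in (0:ℝ)..(T k), V (X t)) - η :=
      htendc.eventually_const_lt (by linarith)
    have h2 : ∀ᶠ k in atTop, 0 < T k := hTtop.eventually_gt_atTop 0
    filter_upwards [h1, h2] with k hk1 hk2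
    have := (hkey (T k) hk2).trans' hk1.le
    rw [div_le_iff₀ hδpos]
    calc η ≤ δ * ((T k)⁻¹ * (volume {t ∈ Icc (0:ℝ) (T k) |
          q (X t) ^ 2 / 2 + V (X t) + η ≤ α0}).toReal) := this
      _ = _ := by ring
  -- frequently along ℝ
  have hfreq : ∃ᶠ S in atTop, η / δ ≤
      S⁻¹ * (volume {t ∈ Icc (0:ℝ) S |
        q (X t) ^ 2 / 2 + V (X t) + η ≤ α0}).toReal := by
    rw [frequently_atTop]
    intro a
    obtain ⟨k, hk1, hk2⟩ := ((hTtop.eventually_ge_atTop a).and hev).exists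
    exact ⟨T k, hk1, hk2⟩
  -- boundedness of the density function
  have hbdd : IsBoundedUnder (· ≤ ·) atTop (fun S : ℝ =>
      S⁻¹ * (volume {t ∈ Icc (0:ℝ) S |
        q (X t) ^ 2 / 2 + V (X t) + η ≤ α0}).toReal) := by
    refine ⟨1, eventually_map.2 ?_⟩
    filter_upwards [eventually_gt_atTop (0:ℝ)] with S hS
    have hvle : (volume {t ∈ Icc (0:ℝ) S |
        q (X t) ^ 2 / 2 + V (X t) + η ≤ α0}).toReal ≤ S := by
      apply ENNReal.toReal_le_of_le_ofReal hS.le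
      refine (measure_mono (sep_subset _ _)).trans ?_
      rw [Real.volume_Icc, sub_zero]
    calc S⁻¹ * (volume {t ∈ Icc (0:ℝ) S |
          q (X t) ^ 2 / 2 + V (X t) + η ≤ α0}).toReal
        ≤ S⁻¹ * S := mul_le_mul_of_nonneg_left hvle (inv_nonneg.2 hS.le)
      _ = 1 := inv_mul_cancel₀ hS.ne'
  exact le_limsup_of_frequently_le hfreq hbdd
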